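/- Suppose T₀(u) ≥ M·V(u)^{1/3} for all u with V(u) ≥ 0, where M > 0. If sequences satisfy V(u_n) = 1, T₀(u_n) → M, T₀(u_n) = T₀(v_n) + T₀(u₀) + o(1), V(u_n) = V(v_n) + V(u₀) + o(1), with V(u₀) = λ₀ ∈ [0,1), T₀(u₀) = S₀ ≥ 0, T₀(v_n) = S_n ≥ 0, then λ₀ = 0 and S₀ = 0. -/
import Mathlib


open Filter Topology

/-- Suppose `M > 0`, `λ₀ ∈ [0,1)`, `S₀ ≥ M λ₀^{1/3}`, and the sequences satisfy `Sₙ, λₙ ≥ 0`,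
`Sₙ ≥ M λₙ^{1/3}` (for large `n`), `λₙ = 1 − λ₀ + o(1)` and `Sₙ = M − S₀ + o(1)`.
Then `λ₀ = 0` and `S₀ = 0`. -/
theorem stmt_13 (M S₀ lam₀ : ℝ) (S lam : ℕ → ℝ)
    (hM : 0 < M) (hlam₀ : lam₀ ∈ Set.Ico (0 : ℝ) 1) (hS₀ : 0 ≤ S₀)
    (hSn : ∀ n, 0 ≤ S n) (hlamn : ∀ n, 0 ≤ lam n)
    (hS₀M : M * lam₀ ^ ((1 : ℝ) / 3) ≤ S₀)
    (hSnM : ∀ᶠ n in atTop, M * lam n ^ ((1 : ℝ) / 3) ≤ S n)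
    (hlamlim : Tendsto lam atTop (nhds (1 - lam₀)))
    (hSlim : Tendsto S atTop (nhds (M - S₀))) :
    lam₀ = 0 ∧ S₀ = 0 := by
  obtain ⟨h0, h1⟩ := hlam₀
  have hpos : 0 < 1 - lam₀ := by linarith
  have htend : Tendsto (fun n => M * lam n ^ ((1 : ℝ) / 3)) atTop
      (nhds (M * (1 - lam₀) ^ ((1 : ℝ) / 3))) := by
    apply Tendsto.const_mul
    exact (Real.continuousAt_rpow_const _ _ (Or.inl hpos.ne')).tendsto.comp hlamlim
  have key : M * (1 - lam₀) ^ ((1 : ℝ) / 3) ≤ M - S₀ :=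
    le_of_tendsto_of_tendsto htend hSlim hSnM
  -- so λ₀^{1/3} + (1-λ₀)^{1/3} ≤ 1
  have hsum : lam₀ ^ ((1 : ℝ) / 3) + (1 - lam₀) ^ ((1 : ℝ) / 3) ≤ 1 := by
    have := add_le_add hS₀M key
    nlinarith
  have hlz : lam₀ = 0 := by
    by_contra h
    have hl : 0 < lam₀ := lt_of_le_of_ne h0 (Ne.symm h)
    have ha : lam₀ ^ (1 : ℝ) < lam₀ ^ ((1 : ℝ) / 3) :=
      Real.rpow_lt_rpow_of_exponent_gt hl h1 (by norm_num)
    have hb : (1 - lam₀) ^ (1 : ℝ) ≤ (1 - lam₀) ^ ((1 : ℝ) / 3) :=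
      Real.rpow_le_rpow_of_exponent_ge hpos (by linarith) (by norm_num)
    rw [Real.rpow_one] at ha
    rw [Real.rpow_one] at hb
    linarith
  refine ⟨hlz, ?_⟩
  subst hlz
  rw [sub_zero, Real.one_rpow] at key
  linarith
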